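/- arXiv:2512.12460 — 2 statements merged into one kernel-verified Lean document; each statement's English description precedes it below -/
import Mathlib

section
/- In A = k⟨x₁, x₂, x₃⟩ with δ = x₁x₂ − x₂x₁ − 1 and 𝒱 = {x₂ⁱx₁ʲ : i, j ≥ 0}, for any v₁, v₂ ∈ 𝒱, β₁, β₂ ∈ {x₃, δ}, and nonzero f₁, f₂ ∈ A with (β₁, v₁) ≠ (β₂, v₂), the leading monomials satisfy TIP(f₁β₁v₁) ≠ TIP(f₂β₂v₂) with respect to the degree order. -/
noncomputable section

/-- The free algebra `k⟨x₁, x₂, x₃⟩`. -/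
abbrev FA (k : Type) [Field k] := MonoidAlgebra k (FreeMonoid (Fin 3))

/-- The generators: `X 0 = x₁`, `X 1 = x₂`, `X 2 = x₃`. -/
def X {k : Type} [Field k] (i : Fin 3) : FA k :=
  MonoidAlgebra.single (FreeMonoid.of i) 1

/-- Degree-vector list of a word: counts of the generators with the count of `x₃` first. -/
def dlist (w : FreeMonoid (Fin 3)) : List ℕ :=
  (List.ofFn fun i : Fin 3 => (FreeMonoid.toList w).count i).reverse

/-- The degree order: compare degree vectors right-lexicographically (count of `x₃` first),
then break ties by the right lexicographic word order with `1 ≺ x₁ ≺ x₂ ≺ x₃`. -/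
instance degOrder : LinearOrder (FreeMonoid (Fin 3)) :=
  LinearOrder.lift' (fun w => toLex (dlist w, (FreeMonoid.toList w).reverse))
    (fun a b h => by
      have h2 : (FreeMonoid.toList a).reverse = (FreeMonoid.toList b).reverse :=
        congrArg (fun p : Lex (List ℕ × List (Fin 3)) => (ofLex p).2) h
      exact FreeMonoid.toList.injective (List.reverse_injective h2))

/-- `TIP f`: the largest monomial occurring in `f` for the degree order, `TIP 0 = ⊥`. -/
def TIP {k : Type} [Field k] (f : FA k) : WithBot (FreeMonoid (Fin 3)) := f.coeff.support.max

/-! The degree order is a monomial order (multiplication is strictly monotone on both sides), so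
for nonzero `f, g` the largest words multiply: `TIP (f * g) = TIP f * TIP g`. Hence
`TIP (f β v) = TIP f · TIP β · v`, with `TIP x₃ = x₃` and `TIP δ = x₁x₂`. Read from the right,
such a word is `x₁ʲ`, then `x₂ⁱ` (`x₂ⁱ⁺¹` for `β = δ`), then a letter other than `x₂`: `x₃` for
`β = x₃` and `x₁` for `β = δ`. Maximal blocks of equal letters are determined by the word, so
`j`, `i` and `β` can be read off `TIP (f β v)`. -/

theorem List.Lex.append_of_length_eq {α : Type*} {r : α → α → Prop} {l₁ l₂ : List α}
    (h : List.Lex r l₁ l₂) (hl : l₁.length = l₂.length) (t : List α) :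
    List.Lex r (l₁ ++ t) (l₂ ++ t) := by
  induction h with
  | nil => simp at hl
  | rel hab => exact .rel hab
  | cons _ ih => exact .cons (ih (by simpa using hl))

theorem List.replicate_append_inj {α : Type*} {a : α} {m n : ℕ} {s t : List α}
    (hs : s.head? ≠ some a) (ht : t.head? ≠ some a)
    (h : replicate m a ++ s = replicate n a ++ t) : m = n ∧ s = t := by
  induction m generalizing n <;> cases n <;> simp_all [replicate_succ]
  simp [← h] at ht

namespace MonoidAlgebra

variable {R M : Type*} [Semiring R] [Mul M] [LinearOrder M] [MulLeftStrictMono M]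
  [MulRightStrictMono M]

theorem uniqueMul_of_max_eq {s t : Finset M} {a b : M} (ha : s.max = a) (hb : t.max = b) :
    UniqueMul s t a b := by
  have := mulLeftMono_of_mulLeftStrictMono M
  have := mulRightMono_of_mulRightStrictMono M
  intro a' b' ha' hb' hab
  have ha'a : a' ≤ a := Finset.le_max_of_eq ha' ha
  have hb'b : b' ≤ b := Finset.le_max_of_eq hb' hb
  constructor
  · by_contra hne
    exact (mul_lt_mul_of_lt_of_le (lt_of_le_of_ne ha'a hne) hb'b).ne hab
  · by_contra hne
    exact (mul_lt_mul_of_le_of_lt ha'a (lt_of_le_of_ne hb'b hne)).ne hab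

theorem max_support_mul [NoZeroDivisors R] {f g : R[M]} {a b : M}
    (ha : f.coeff.support.max = a) (hb : g.coeff.support.max = b) :
    (f * g).coeff.support.max = ↑(a * b) := by
  classical
  have := mulLeftMono_of_mulLeftStrictMono M
  have := mulRightMono_of_mulRightStrictMono M
  apply le_antisymm
  · refine Finset.max_le fun x hx => ?_
    obtain ⟨a', ha', b', hb', rfl⟩ := Finset.mem_mul.1 (support_coeff_mul_subset f g hx)
    exact WithBot.coe_le_coe.2
      (mul_le_mul' (Finset.le_max_of_eq ha' ha) (Finset.le_max_of_eq hb' hb))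
  · refine Finset.le_max (Finsupp.mem_support_iff.2 ?_)
    rw [coeff_mul_mul_of_uniqueMul (uniqueMul_of_max_eq ha hb)]
    exact mul_ne_zero (Finsupp.mem_support_iff.1 (Finset.mem_of_max ha))
      (Finsupp.mem_support_iff.1 (Finset.mem_of_max hb))

end MonoidAlgebra

namespace FreeMonoid

theorem dlist_eq (w : FreeMonoid (Fin 3)) :
    dlist w = [w.toList.count 2, w.toList.count 1, w.toList.count 0] := by
  simp [dlist, List.ofFn_succ]

theorem lt_iff_dlist (a b : FreeMonoid (Fin 3)) :
    a < b ↔ dlist a < dlist b ∨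
      dlist a = dlist b ∧ List.Lex (· < ·) a.toList.reverse b.toList.reverse :=
  Prod.Lex.lt_iff

theorem dlist_lt_dlist_iff {a b : FreeMonoid (Fin 3)} :
    dlist a < dlist b ↔ a.toList.count 2 < b.toList.count 2 ∨
      a.toList.count 2 = b.toList.count 2 ∧ (a.toList.count 1 < b.toList.count 1 ∨
        a.toList.count 1 = b.toList.count 1 ∧ a.toList.count 0 < b.toList.count 0) := by
  rw [dlist_eq, dlist_eq]
  show List.Lex _ _ _ ↔ _
  simp only [List.cons_lex_cons_iff, List.not_lex_nil, and_false, or_false]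

theorem dlist_eq_dlist_iff {a b : FreeMonoid (Fin 3)} :
    dlist a = dlist b ↔ a.toList.Perm b.toList := by
  rw [List.perm_iff_count]
  simp [dlist_eq, Fin.forall_fin_succ]
  tauto

instance : MulLeftStrictMono (FreeMonoid (Fin 3)) where
  elim c a b (h : a < b) := show c * a < c * b by
    rw [lt_iff_dlist] at h ⊢
    rcases h with hd | ⟨hd, hlex⟩
    · left
      simp only [dlist_lt_dlist_iff, toList_mul, List.count_append] at hd ⊢
      omega
    · have hperm := dlist_eq_dlist_iff.1 hd
      refine .inr ⟨dlist_eq_dlist_iff.2 (hperm.append_left _), ?_⟩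
      simpa only [toList_mul, List.reverse_append] using
        hlex.append_of_length_eq (by simpa using hperm.length_eq) _

instance : MulRightStrictMono (FreeMonoid (Fin 3)) where
  elim c a b (h : a < b) := show a * c < b * c by
    rw [lt_iff_dlist] at h ⊢
    rcases h with hd | ⟨hd, hlex⟩
    · left
      simp only [dlist_lt_dlist_iff, toList_mul, List.count_append] at hd ⊢
      omega
    · refine .inr ⟨dlist_eq_dlist_iff.2 ((dlist_eq_dlist_iff.1 hd).append_right _), ?_⟩
      simpa only [toList_mul, List.reverse_append] using hlex.append_left _ _

theorem toList_of_pow {α : Type*} (a : α) (n : ℕ) :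
    (of a ^ n).toList = List.replicate n a := by
  induction n with
  | zero => rfl
  | succ n ih => rw [pow_succ, toList_mul, ih, toList_of, List.replicate_succ']

/-- The hypotheses on `cᵢ` say that `x₂ⁱ x₁ʲ` is the longest suffix of the word lying in `𝒱`. -/
theorem eq_of_mul_of_mul_pow_mul_pow_eq {m₁ m₂ : FreeMonoid (Fin 3)} {c₁ c₂ : Fin 3}
    {i₁ j₁ i₂ j₂ : ℕ} (hc₁ : c₁ ≠ 1) (hc₂ : c₂ ≠ 1) (hi₁ : c₁ ≠ 0 ∨ i₁ ≠ 0)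
    (hi₂ : c₂ ≠ 0 ∨ i₂ ≠ 0)
    (h : m₁ * of c₁ * (of 1 ^ i₁ * of 0 ^ j₁) = m₂ * of c₂ * (of 1 ^ i₂ * of 0 ^ j₂)) :
    c₁ = c₂ ∧ i₁ = i₂ ∧ j₁ = j₂ := by
  have hrev := congrArg (fun w => w.toList.reverse) h
  simp only [toList_mul, toList_of_pow, toList_of, List.reverse_append, List.reverse_replicate,
    List.append_assoc, List.reverse_cons, List.nil_append, List.cons_append] at hrev
  have head_ne_zero {c : Fin 3} {i : ℕ} (r : List (Fin 3)) (hc : c ≠ 1) (hi : c ≠ 0 ∨ i ≠ 0) :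
      (List.replicate i 1 ++ c :: r).head? ≠ some 0 := by
    cases i <;> simp_all [List.replicate_succ]
  obtain ⟨rfl, hrest⟩ :=
    List.replicate_append_inj (head_ne_zero _ hc₁ hi₁) (head_ne_zero _ hc₂ hi₂) hrev
  obtain ⟨rfl, hcr⟩ := List.replicate_append_inj (by simpa using hc₁) (by simpa using hc₂) hrest
  exact ⟨(List.cons.inj hcr).1, rfl, rfl⟩

end FreeMonoid

section LeadingWords

variable {k : Type} [Field k]

theorem exists_TIP_eq {f : FA k} (hf : f ≠ 0) : ∃ m : FreeMonoid (Fin 3), TIP f = m :=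
  Finset.max_of_nonempty (Finsupp.support_nonempty_iff.2 (MonoidAlgebra.coeff_eq_zero.not.2 hf))

theorem TIP_mul {f g : FA k} {a b : FreeMonoid (Fin 3)} (ha : TIP f = a) (hb : TIP g = b) :
    TIP (f * g) = ↑(a * b) :=
  MonoidAlgebra.max_support_mul ha hb

theorem TIP_single (w : FreeMonoid (Fin 3)) : TIP (MonoidAlgebra.single w (1 : k)) = w := by
  simp [TIP, MonoidAlgebra.coeff_single]

theorem TIP_delta :
    TIP (X 0 * X 1 - X 1 * X 0 - 1 : FA k) =
      ↑(FreeMonoid.of 0 * FreeMonoid.of 1 : FreeMonoid (Fin 3)) := by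
  classical
  set u : FreeMonoid (Fin 3) := .of 0 * .of 1
  have hcoeff : (X 0 * X 1 - X 1 * X 0 - 1 : FA k).coeff =
      Finsupp.single u 1 - Finsupp.single (.of 1 * .of 0) 1 - Finsupp.single 1 1 := by
    simp [u, X, MonoidAlgebra.single_mul_single, MonoidAlgebra.one_def]
  unfold TIP
  rw [hcoeff]
  refine le_antisymm (Finset.max_le fun x hx => ?_) (Finset.le_max (a := u) ?_)
  · obtain rfl | rfl | rfl : x = u ∨ x = .of 1 * .of 0 ∨ x = 1 := by
      contrapose! hx
      simp [hx.1.symm, hx.2.1.symm, hx.2.2.symm]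
    all_goals exact WithBot.coe_le_coe.2 (by decide)
  · have hne : (FreeMonoid.of 1 * FreeMonoid.of 0 : FreeMonoid (Fin 3)) ≠ u := by decide
    simp [u, hne]

theorem TIP_mul_X_two_mul_single {f : FA k} {m : FreeMonoid (Fin 3)} (hm : TIP f = m)
    (i j : ℕ) :
    TIP (f * X 2 * MonoidAlgebra.single (.of 1 ^ i * .of 0 ^ j) 1) =
      ↑(m * .of 2 * (.of 1 ^ i * .of 0 ^ j)) :=
  TIP_mul (TIP_mul hm (TIP_single _)) (TIP_single _)

theorem TIP_mul_delta_mul_single {f : FA k} {m : FreeMonoid (Fin 3)} (hm : TIP f = m)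
    (i j : ℕ) :
    TIP (f * (X 0 * X 1 - X 1 * X 0 - 1) * MonoidAlgebra.single (.of 1 ^ i * .of 0 ^ j) 1) =
      ↑(m * .of 0 * (.of 1 ^ (i + 1) * .of 0 ^ j)) := by
  rw [TIP_mul (TIP_mul hm TIP_delta) (TIP_single _), pow_succ']
  simp only [mul_assoc]

end LeadingWords

/-- In `A = k⟨x₁,x₂,x₃⟩` with `δ = x₁x₂ − x₂x₁ − 1` and
`𝒱 = {x₂ⁱx₁ʲ}`: for any `v₁, v₂ ∈ 𝒱`, `β₁, β₂ ∈ {x₃, δ}` and nonzero `f₁, f₂ ∈ A` with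
`(β₁, v₁) ≠ (β₂, v₂)`, we have `TIP (f₁ β₁ v₁) ≠ TIP (f₂ β₂ v₂)` in the degree order. -/
theorem stmt8 (k : Type) [Field k]
    (δ : FA k) (hδ : δ = X 0 * X 1 - X 1 * X 0 - 1)
    (V : Set (FreeMonoid (Fin 3)))
    (hV : V = {w | ∃ i j : ℕ, w = (FreeMonoid.of (1 : Fin 3)) ^ i * (FreeMonoid.of 0) ^ j}) :
    ∀ v₁ ∈ V, ∀ v₂ ∈ V, ∀ β₁ ∈ ({X 2, δ} : Set (FA k)), ∀ β₂ ∈ ({X 2, δ} : Set (FA k)),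
      ∀ f₁ f₂ : FA k, f₁ ≠ 0 → f₂ ≠ 0 → (β₁, v₁) ≠ (β₂, v₂) →
        TIP (f₁ * β₁ * MonoidAlgebra.single v₁ 1) ≠
          TIP (f₂ * β₂ * MonoidAlgebra.single v₂ 1) := by
  subst hV hδ
  rintro _ ⟨i₁, j₁, rfl⟩ _ ⟨i₂, j₂, rfl⟩ β₁ hβ₁ β₂ hβ₂ f₁ f₂ hf₁ hf₂ hne heq
  obtain ⟨m₁, hm₁⟩ := exists_TIP_eq hf₁
  obtain ⟨m₂, hm₂⟩ := exists_TIP_eq hf₂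
  have h2 : (2 : Fin 3) ≠ 1 ∧ (2 : Fin 3) ≠ 0 := by decide
  have h0 : (0 : Fin 3) ≠ 1 := by decide
  rcases hβ₁ with rfl | rfl <;> rcases hβ₂ with rfl | rfl
  · rw [TIP_mul_X_two_mul_single hm₁, TIP_mul_X_two_mul_single hm₂] at heq
    obtain ⟨-, rfl, rfl⟩ := FreeMonoid.eq_of_mul_of_mul_pow_mul_pow_eq h2.1 h2.1 (.inl h2.2)
      (.inl h2.2) (WithBot.coe_injective heq)
    exact hne rfl
  · rw [TIP_mul_X_two_mul_single hm₁, TIP_mul_delta_mul_single hm₂] at heq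
    exact h2.2 (FreeMonoid.eq_of_mul_of_mul_pow_mul_pow_eq h2.1 h0 (.inl h2.2)
      (.inr i₂.succ_ne_zero) (WithBot.coe_injective heq)).1
  · rw [TIP_mul_delta_mul_single hm₁, TIP_mul_X_two_mul_single hm₂] at heq
    exact h2.2 (FreeMonoid.eq_of_mul_of_mul_pow_mul_pow_eq h0 h2.1 (.inr i₁.succ_ne_zero)
      (.inl h2.2) (WithBot.coe_injective heq)).1.symm
  · rw [TIP_mul_delta_mul_single hm₁, TIP_mul_delta_mul_single hm₂] at heq
    obtain ⟨-, hi, rfl⟩ := FreeMonoid.eq_of_mul_of_mul_pow_mul_pow_eq h0 h0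
      (.inr i₁.succ_ne_zero) (.inr i₂.succ_ne_zero) (WithBot.coe_injective heq)
    obtain rfl := Nat.succ_injective hi
    exact hne rfl
end
end

section
/- In A = k⟨x₁, x₂, x₃⟩ with δ = x₁x₂ − x₂x₁ − 1, for every nonzero f in the two-sided ideal (x₃, δ) and every monomial v of the form x₂ⁱx₁ʲ, the leading monomial of f with respect to the degree order is not equal to v. In particular, if f ∈ (δ) (the two-sided ideal generated by δ alone), then TIP(f) contains the factor x₁x₂, i.e., TIP(f) = a·x₁x₂·b for some monomials a, b. -/
noncomputable section

/-!
Let `A` act on the vector space with basis all words: `x₂` prepends `x₂`, `x₃` prepends `x₃`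
scaled by `c`, and `x₁` prepends `x₁` and then rewrites `x₁x₂ ↦ x₂x₁ + 1` as long as `x₁` is
followed by `x₂`. This makes `δ` act by `0`, and for `c = 0` also `x₃`, so every element of the
ideal annihilates the empty word `1`. Each rewriting step replaces a word by smaller ones
(the degree order is a monomial order), so a word `w` sends `1` to `w` plus smaller words, and to
exactly `w` if `w` has no factor `x₁x₂` (and no `x₃` when `c = 0`). Applying `f` to `1` and
reading off the coefficient of `TIP f` gives the leading coefficient of `f`, which is nonzero.
-/

theorem List.append_lt_append_of_length_eq {α : Type*} [LT α] {l₁ l₂ : List α} (t : List α)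
    (hlen : l₁.length = l₂.length) (h : l₁ < l₂) : l₁ ++ t < l₂ ++ t := by
  induction l₁ generalizing l₂ with
  | nil => cases l₂ <;> simp_all
  | cons a l₁ ih =>
    cases l₂ with
    | nil => simp at hlen
    | cons b l₂ =>
      simp only [List.cons_append, List.cons_lt_cons_iff] at h ⊢
      exact h.imp_right fun h => ⟨h.1, ih (by simpa using hlen) h.2⟩

theorem Finsupp.single_mem_supported_Iic {k α : Type*} [Semiring k] [Preorder α]
    (a : α) (b : k) :
    Finsupp.single a b ∈ Finsupp.supported k k (Set.Iic a) :=
  Finsupp.single_mem_supported k b (Set.mem_Iic.2 le_rfl)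

theorem Finsupp.apply_mem_supported_Iic {k α : Type*} [Semiring k] [Preorder α]
    (φ : (α →₀ k) →ₗ[k] (α →₀ k)) {g : α → α} (hg : Monotone g)
    (hφ : ∀ s, φ (Finsupp.single s 1) ∈ Finsupp.supported k k (Set.Iic (g s)))
    {m : α →₀ k} {t : α} (hm : m ∈ Finsupp.supported k k (Set.Iic t)) :
    φ m ∈ Finsupp.supported k k (Set.Iic (g t)) := by
  rw [Finsupp.supported_eq_span_single] at hm
  refine (Submodule.span_le (p := (Finsupp.supported k k (Set.Iic (g t))).comap φ)).2 ?_ hm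
  rintro _ ⟨s, hs, rfl⟩
  exact Finsupp.supported_mono (Set.Iic_subset_Iic.2 (hg hs)) (hφ s)

theorem Finsupp.apply_self_eq_zero_of_linearCombination_eq_zero {k α : Type*} [Semiring k]
    [NoZeroDivisors k] [LinearOrder α] {v : α → α →₀ k}
    (hv : ∀ w, v w ∈ Finsupp.supported k k (Set.Iic w)) {f : α →₀ k}
    (hf : Finsupp.linearCombination k v f = 0) {u : α} (hu : f.support.max = u) : v u u = 0 := by
  have hfu : f u ≠ 0 := Finsupp.mem_support_iff.1 (Finset.mem_of_max hu)
  have hcoeff : f u * v u u = 0 := by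
    rw [← Finsupp.zero_apply (a := u), ← hf, Finsupp.linearCombination_apply, Finsupp.sum_apply,
      Finsupp.sum, Finset.sum_eq_single u]
    · rfl
    · intro w hw hwu
      have hwu : w < u := (Finset.le_max_of_eq hw hu).lt_of_ne hwu
      have : u ∉ (v w).support := fun h => hwu.not_ge ((Finsupp.mem_supported k _).1 (hv w) h)
      simp [Finsupp.notMem_support_iff.1 this]
    · intro h
      exact absurd (Finset.mem_of_max hu) h
  exact (mul_eq_zero.1 hcoeff).resolve_left hfu

namespace WeylNormalForm

open FreeMonoid

lemma dlist_eq_counts (w : FreeMonoid (Fin 3)) :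
    dlist w = [w.toList.count 2, w.toList.count 1, w.toList.count 0] := by
  simp [dlist, List.ofFn_succ]

lemma le_iff_lex {v w : FreeMonoid (Fin 3)} :
    v ≤ w ↔ dlist v < dlist w ∨ dlist v = dlist w ∧ v.toList.reverse ≤ w.toList.reverse :=
  Prod.Lex.toLex_le_toLex

lemma lt_iff_lex {v w : FreeMonoid (Fin 3)} :
    v < w ↔ dlist v < dlist w ∨ dlist v = dlist w ∧ v.toList.reverse < w.toList.reverse :=
  Prod.Lex.toLex_lt_toLex

lemma length_eq_of_dlist_eq {v w : FreeMonoid (Fin 3)} (h : dlist v = dlist w) :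
    v.toList.length = w.toList.length := by
  have hlen (l : List (Fin 3)) : l.length = l.count 0 + l.count 1 + l.count 2 := by
    induction l with
    | nil => rfl
    | cons a l ih => fin_cases a <;> simp [ih] <;> omega
  simp only [dlist_eq_counts, List.cons.injEq, and_true] at h
  rw [hlen, hlen w.toList]
  omega

lemma dlist_mul_lt_mul_iff_left (u v w : FreeMonoid (Fin 3)) :
    dlist (u * v) < dlist (u * w) ↔ dlist v < dlist w := by
  simp [dlist_eq_counts, List.cons_lt_cons_iff]

lemma dlist_mul_lt_mul_iff_right (u v w : FreeMonoid (Fin 3)) :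
    dlist (v * u) < dlist (w * u) ↔ dlist v < dlist w := by
  simp [dlist_eq_counts, List.cons_lt_cons_iff]

lemma dlist_mul_eq_mul_iff_left (u v w : FreeMonoid (Fin 3)) :
    dlist (u * v) = dlist (u * w) ↔ dlist v = dlist w := by
  simp [dlist_eq_counts]

lemma dlist_mul_eq_mul_iff_right (u v w : FreeMonoid (Fin 3)) :
    dlist (v * u) = dlist (w * u) ↔ dlist v = dlist w := by
  simp [dlist_eq_counts]

instance : MulLeftMono (FreeMonoid (Fin 3)) where
  elim u v w h := by
    dsimp only at h ⊢
    rw [le_iff_lex, dlist_mul_lt_mul_iff_left, dlist_mul_eq_mul_iff_left, toList_mul,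
      toList_mul, List.reverse_append, List.reverse_append]
    rcases le_iff_lex.1 h with h | ⟨hd, h⟩
    · exact Or.inl h
    refine Or.inr ⟨hd, ?_⟩
    rcases h.lt_or_eq with h | h
    · exact (List.append_lt_append_of_length_eq _ (by simpa using length_eq_of_dlist_eq hd) h).le
    · rw [h]

instance : MulRightStrictMono (FreeMonoid (Fin 3)) where
  elim u v w h := by
    dsimp only [Function.swap] at h ⊢
    rw [lt_iff_lex, dlist_mul_lt_mul_iff_right, dlist_mul_eq_mul_iff_right, toList_mul,
      toList_mul, List.reverse_append, List.reverse_append]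
    exact (lt_iff_lex.1 h).imp_right fun h => ⟨h.1, List.append_left_lt h.2⟩

lemma of_one_mul_of_zero_mul_lt (w : FreeMonoid (Fin 3)) :
    of 1 * of 0 * w < of 0 * of 1 * w :=
  mul_lt_mul_left (by decide) w

lemma self_lt_of_zero_mul_of_one_mul (w : FreeMonoid (Fin 3)) : w < of 0 * of 1 * w := by
  simpa using mul_lt_mul_left (show (1 : FreeMonoid (Fin 3)) < of 0 * of 1 by decide) w

variable {k : Type} [Field k]

open _root_.Finsupp

def leftMul (a : Fin 3) : (FreeMonoid (Fin 3) →₀ k) →ₗ[k] (FreeMonoid (Fin 3) →₀ k) :=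
  lmapDomain k k (of a * ·)

lemma leftMul_single (a : Fin 3) (w : FreeMonoid (Fin 3)) (b : k) :
    leftMul a (single w b) = single (of a * w) b :=
  mapDomain_single

def x₁Mul : List (Fin 3) → (FreeMonoid (Fin 3) →₀ k)
  | 1 :: s => leftMul 1 (x₁Mul s) + single (ofList s) 1
  | s => single (ofList (0 :: s)) 1

def gen (c : k) : Fin 3 → Module.End k (FreeMonoid (Fin 3) →₀ k) :=
  ![linearCombination k fun w => x₁Mul w.toList, leftMul 1, c • leftMul 2]

def rep (c : k) : FA k →ₐ[k] Module.End k (FreeMonoid (Fin 3) →₀ k) :=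
  MonoidAlgebra.lift k _ _ (FreeMonoid.lift (gen c))

lemma rep_X (c : k) (i : Fin 3) : rep c (X i) = gen c i := by
  rw [rep, X, MonoidAlgebra.lift_single, FreeMonoid.lift_eval_of, one_smul]

lemma gen_zero_mul_gen_one (c : k) : gen c 0 * gen c 1 = gen c 1 * gen c 0 + 1 := by
  ext w : 2
  simp [gen, leftMul_single, x₁Mul]

lemma rep_delta (c : k) : rep c (X 0 * X 1 - X 1 * X 0 - 1) = 0 := by
  rw [map_sub, map_sub, map_mul, map_mul, map_one, rep_X, rep_X, gen_zero_mul_gen_one]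
  abel

lemma rep_zero_X_two : rep (0 : k) (X 2) = 0 := by
  simp [rep_X, gen]

lemma leftMul_mem_supported_Iic (a : Fin 3) {m : FreeMonoid (Fin 3) →₀ k}
    {t : FreeMonoid (Fin 3)} (hm : m ∈ supported k k (Set.Iic t)) :
    leftMul a m ∈ supported k k (Set.Iic (of a * t)) :=
  Finsupp.apply_mem_supported_Iic _ (fun _ _ h => mul_le_mul_right h _)
    (fun s => by simpa [leftMul_single] using Finsupp.single_mem_supported_Iic (k := k) _ 1) hm

lemma x₁Mul_mem_supported_Iic (s : List (Fin 3)) :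
    x₁Mul (k := k) s ∈ supported k k (Set.Iic (of 0 * ofList s)) := by
  induction s with
  | nil => exact Finsupp.single_mem_supported_Iic _ 1
  | cons a s ih =>
    by_cases ha : a = 1
    · subst ha
      rw [x₁Mul]
      refine Submodule.add_mem _ ?_ ?_
      · refine supported_mono (Set.Iic_subset_Iic.2 ?_) (leftMul_mem_supported_Iic 1 ih)
        simpa [← mul_assoc] using (of_one_mul_of_zero_mul_lt (ofList s)).le
      · refine supported_mono (Set.Iic_subset_Iic.2 ?_) (Finsupp.single_mem_supported_Iic _ 1)
        simpa [← mul_assoc] using (self_lt_of_zero_mul_of_one_mul (ofList s)).le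
    · rw [x₁Mul.eq_2 _ (by simpa using ha)]
      exact Finsupp.single_mem_supported_Iic _ 1

lemma gen_mem_supported_Iic (c : k) (a : Fin 3) {m : FreeMonoid (Fin 3) →₀ k}
    {t : FreeMonoid (Fin 3)} (hm : m ∈ supported k k (Set.Iic t)) :
    gen c a m ∈ supported k k (Set.Iic (of a * t)) := by
  fin_cases a
  · refine Finsupp.apply_mem_supported_Iic _ (fun _ _ h => mul_le_mul_right h _) (fun s => ?_) hm
    simpa [gen] using x₁Mul_mem_supported_Iic (k := k) s.toList
  · exact leftMul_mem_supported_Iic 1 hm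
  · exact Submodule.smul_mem _ c (leftMul_mem_supported_Iic 2 hm)

lemma lift_gen_mem_supported_Iic (c : k) (w : FreeMonoid (Fin 3)) {m : FreeMonoid (Fin 3) →₀ k}
    {t : FreeMonoid (Fin 3)} (hm : m ∈ supported k k (Set.Iic t)) :
    FreeMonoid.lift (gen c) w m ∈ supported k k (Set.Iic (w * t)) := by
  induction w using FreeMonoid.inductionOn' with
  | one => simpa using hm
  | of_mul a w ih => simpa [mul_assoc] using gen_mem_supported_Iic c a ih

lemma lift_gen_ofList_single_one {c : k} {u : List (Fin 3)} (hu : ¬ [0, 1] <:+: u)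
    (hc : 2 ∈ u → c = 1) :
    FreeMonoid.lift (gen c) (ofList u) (single 1 1) = single (ofList u) 1 := by
  induction u with
  | nil => rfl
  | cons a u ih =>
    rw [ofList_cons, map_mul, Module.End.mul_apply, FreeMonoid.lift_eval_of,
      ih (fun h => hu (List.infix_cons h)) (fun h => hc (List.mem_cons_of_mem a h))]
    fin_cases a
    · have hhead : ∀ s, u ≠ 1 :: s := by
        rintro s rfl
        exact hu (List.prefix_iff_eq_take.2 rfl).isInfix
      simpa [gen] using x₁Mul.eq_2 (k := k) u hhead
    · exact leftMul_single 1 _ 1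
    · simp [gen, hc List.mem_cons_self, leftMul_single]

lemma rep_apply_single_one (c : k) (f : FA k) :
    rep c f (single 1 1) =
      linearCombination k (fun w => FreeMonoid.lift (gen c) w (single 1 1)) f.coeff := by
  simp [rep, MonoidAlgebra.lift_apply, linearCombination_apply, Finsupp.sum]

theorem TIP_ne_of_rep_eq_zero {c : k} {f : FA k} (hf : rep c f = 0) {u : List (Fin 3)}
    (hu : ¬ [0, 1] <:+: u) (hc : 2 ∈ u → c = 1) : TIP f ≠ ofList u := by
  intro hTIP
  have h := Finsupp.apply_self_eq_zero_of_linearCombination_eq_zero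
    (fun w => by
      simpa using lift_gen_mem_supported_Iic c w (Finsupp.single_mem_supported_Iic 1 (1 : k)))
    (by rw [← rep_apply_single_one, hf]; rfl) hTIP
  rw [lift_gen_ofList_single_one hu hc, single_eq_same] at h
  exact one_ne_zero h

lemma toList_of_pow (a : Fin 3) (n : ℕ) : (of a ^ n).toList = List.replicate n a := by
  induction n with
  | zero => rfl
  | succ n ih => rw [pow_succ', toList_of_mul, ih, List.replicate_succ]

lemma not_infix_toList_of_one_pow_mul_of_zero_pow (i j : ℕ) :
    ¬ [0, 1] <:+: (of (1 : Fin 3) ^ i * of 0 ^ j).toList := by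
  have hanti : (of (1 : Fin 3) ^ i * of 0 ^ j).toList.Pairwise (· ≥ ·) := by
    simp [toList_mul, toList_of_pow, List.pairwise_append, List.pairwise_replicate]
  exact fun h => absurd (hanti.sublist h.sublist) (by decide)

lemma two_notMem_toList_of_one_pow_mul_of_zero_pow (i j : ℕ) :
    2 ∉ (of (1 : Fin 3) ^ i * of 0 ^ j).toList := by
  simp [toList_mul, toList_of_pow]

end WeylNormalForm

open WeylNormalForm FreeMonoid

/-- In `A = k⟨x₁,x₂,x₃⟩` with `δ = x₁x₂ − x₂x₁ − 1`: for every nonzero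
`f` in the two-sided ideal `(x₃, δ)` and all `i, j ≥ 0`, `TIP f ≠ x₂ⁱx₁ʲ` for the degree
order; and if moreover `f` lies in the two-sided ideal `(δ)`, then `TIP f = a·x₁x₂·b`
for some monomials `a`, `b`. -/
theorem stmt9 (k : Type) [Field k]
    (δ : FA k) (hδ : δ = X 0 * X 1 - X 1 * X 0 - 1)
    (I : Submodule k (FA k))
    (hI : I = Submodule.span k {x | ∃ a b : FA k, x = a * X 2 * b ∨ x = a * δ * b})
    (Iδ : Submodule k (FA k))
    (hIδ : Iδ = Submodule.span k {x | ∃ a b : FA k, x = a * δ * b}) :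
    (∀ f ∈ I, f ≠ 0 → ∀ i j : ℕ,
      TIP f ≠ (((FreeMonoid.of (1 : Fin 3)) ^ i * (FreeMonoid.of 0) ^ j :
        FreeMonoid (Fin 3)) : WithBot (FreeMonoid (Fin 3)))) ∧
    (∀ f ∈ Iδ, f ≠ 0 → ∃ a b : FreeMonoid (Fin 3),
      TIP f = ((a * (FreeMonoid.of (0 : Fin 3) * FreeMonoid.of 1) * b :
        FreeMonoid (Fin 3)) : WithBot (FreeMonoid (Fin 3)))) := by
  subst hδ hI hIδ
  have rep_eq_zero {c : k} {S : Set (FA k)} (hS : ∀ x ∈ S, rep c x = 0) {f : FA k}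
      (hf : f ∈ Submodule.span k S) : rep c f = 0 :=
    (Submodule.span_le (p := LinearMap.ker (rep c).toLinearMap)).2 hS hf
  refine ⟨fun f hf _ i j => ?_, fun f hf hf0 => ?_⟩
  · have hρ : rep 0 f = 0 :=
      rep_eq_zero (by rintro _ ⟨a, b, rfl | rfl⟩ <;> simp [rep_zero_X_two, rep_delta]) hf
    exact TIP_ne_of_rep_eq_zero hρ (not_infix_toList_of_one_pow_mul_of_zero_pow i j)
      (fun h => absurd h (two_notMem_toList_of_one_pow_mul_of_zero_pow i j))
  · have hρ : rep 1 f = 0 := rep_eq_zero (by rintro _ ⟨a, b, rfl⟩; simp [rep_delta]) hf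
    obtain ⟨u, hu⟩ := Finset.max_of_nonempty
      (Finsupp.support_nonempty_iff.2 (mt MonoidAlgebra.coeff_eq_zero.1 hf0))
    have hinfix : [0, 1] <:+: u.toList :=
      not_not.1 fun h => TIP_ne_of_rep_eq_zero hρ h (fun _ => rfl) hu
    obtain ⟨s, t, hst⟩ := hinfix
    exact ⟨ofList s, ofList t, hu.trans (congrArg _ hst.symm)⟩
end
end
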